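/- Assume the non-parallel condition (NP): A e_i ≠ η A e_j for all indices i ≠ j and all η ∈ ℝ. Then for every index j and every nonzero scalar x*_j ∈ ℝ, the vector x* = x*_j e_j is the unique minimizer of the weighted ℓ1 norm ‖W x‖₁ = Σ_{i=1}^n w_i |x_i| over all x ∈ ℝⁿ satisfying A x = A (x*_j e_j). -/

import Mathlib

open scoped RealInnerProductSpace Classical

/-- The `i`-th standard basis vector of `ℝⁿ`. -/
noncomputable def stdBasis (n : ℕ) (i : Fin n) : EuclideanSpace ℝ (Fin n) :=
  EuclideanSpace.single i 1

/-- `P`: the orthogonal projection of `ℝⁿ` onto the orthogonal complement of `ker A`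
(this equals `A†A` for the Moore–Penrose pseudoinverse `A†`). -/
noncomputable def proj {m n : ℕ} (A : EuclideanSpace ℝ (Fin n) →ₗ[ℝ] EuclideanSpace ℝ (Fin m))
    (x : EuclideanSpace ℝ (Fin n)) : EuclideanSpace ℝ (Fin n) :=
  (Submodule.orthogonalProjection (LinearMap.ker A)ᗮ x : EuclideanSpace ℝ (Fin n))

/-- The weights `w i = ‖P e_i‖₂`. -/
noncomputable def wgt {m n : ℕ} (A : EuclideanSpace ℝ (Fin n) →ₗ[ℝ] EuclideanSpace ℝ (Fin m))
    (i : Fin n) : ℝ :=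
  ‖proj A (stdBasis n i)‖

/-- The weighted ℓ¹ norm `‖W x‖₁ = ∑ i, w i * |x i|`. -/
noncomputable def wl1 {m n : ℕ} (A : EuclideanSpace ℝ (Fin n) →ₗ[ℝ] EuclideanSpace ℝ (Fin m))
    (x : EuclideanSpace ℝ (Fin n)) : ℝ :=
  ∑ i, wgt A i * |x i|

/-!
Since `P x = ∑ i, x i • P e_i`, the triangle inequality gives `‖P x‖ ≤ ‖W x‖₁`, with equality
at multiples of a single `e_j`; all feasible points have the same image under `P`, so `x*` is a
minimizer. For a minimizer `y` the triangle inequality is then an equality, which in the strictly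
convex space `ℝⁿ` forces the nonzero terms `y i • P e_i` onto a common ray. Because `A ∘ P = A`,
condition (NP) makes any two `P e_i` linearly independent, so `y` has a single nonzero coordinate,
and comparing `P y = x*_j • P e_j` pins it down.
-/

theorem sameRay_of_norm_sum_eq_sum_norm {E ι : Type*} [NormedAddCommGroup E] [NormedSpace ℝ E]
    [StrictConvexSpace ℝ E] [Fintype ι] {v : ι → E} (h : ‖∑ l, v l‖ = ∑ l, ‖v l‖) {i k : ι}
    (hik : i ≠ k) : SameRay ℝ (v i) (v k) := by
  set s : Finset ι := {i, k}
  have hsplit : ∀ f : ι → ℝ, ∑ l, f l = f i + f k + ∑ l ∈ sᶜ, f l := fun f => by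
    rw [← Finset.sum_add_sum_compl s, Finset.sum_pair hik]
  have hle : ‖∑ l, v l‖ ≤ ‖v i + v k‖ + ∑ l ∈ sᶜ, ‖v l‖ := by
    rw [← Finset.sum_add_sum_compl s, Finset.sum_pair hik]
    exact (norm_add_le _ _).trans (by gcongr; exact norm_sum_le _ _)
  rw [h, hsplit] at hle
  exact sameRay_iff_norm_add.mpr (le_antisymm (norm_add_le _ _) (by linarith))

theorem not_sameRay_smul_smul_of_linearIndependent {E : Type*} [AddCommGroup E] [Module ℝ E]
    {u v : E} (h : LinearIndependent ℝ ![u, v]) {a b : ℝ} (ha : a ≠ 0) (hb : b ≠ 0) :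
    ¬SameRay ℝ (a • u) (b • v) := by
  have hab : LinearIndependent ℝ ![a • u, b • v] := by
    refine LinearIndependent.pair_iff.mpr fun s t hst => ?_
    rw [smul_smul, smul_smul] at hst
    obtain ⟨hs, ht⟩ := LinearIndependent.pair_iff.mp h _ _ hst
    exact ⟨(mul_eq_zero.mp hs).resolve_right ha, (mul_eq_zero.mp ht).resolve_right hb⟩
  exact fun hray => sameRay_or_sameRay_neg_iff_not_linearIndependent.mp (Or.inl hray) hab

theorem eq_smul_stdBasis_of_forall_ne {n : ℕ} {y : EuclideanSpace ℝ (Fin n)} {i : Fin n}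
    (h : ∀ k, k ≠ i → y k = 0) : y = y i • stdBasis n i := by
  ext k
  by_cases hk : k = i
  · subst hk; simp [stdBasis]
  · simp [stdBasis, hk, h k hk]

section Projection

variable {m n : ℕ} (A : EuclideanSpace ℝ (Fin n) →ₗ[ℝ] EuclideanSpace ℝ (Fin m))

theorem proj_eq_starProjection (x : EuclideanSpace ℝ (Fin n)) :
    proj A x = (LinearMap.ker A)ᗮ.starProjection x :=
  rfl

theorem map_proj (x : EuclideanSpace ℝ (Fin n)) : A (proj A x) = A x := by
  have hmem := (LinearMap.ker A)ᗮ.sub_starProjection_mem_orthogonal x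
  rw [Submodule.orthogonal_orthogonal, LinearMap.mem_ker, map_sub, sub_eq_zero] at hmem
  rw [proj_eq_starProjection, hmem]

theorem proj_eq_proj_iff {x y : EuclideanSpace ℝ (Fin n)} : proj A x = proj A y ↔ A x = A y := by
  refine ⟨fun h => by rw [← map_proj A x, h, map_proj], fun h => ?_⟩
  rw [proj_eq_starProjection, proj_eq_starProjection, ← sub_eq_zero, ← map_sub,
    Submodule.starProjection_orthogonal_apply_eq_zero]
  rw [LinearMap.mem_ker, map_sub, h, sub_self]

theorem proj_smul (c : ℝ) (x : EuclideanSpace ℝ (Fin n)) : proj A (c • x) = c • proj A x :=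
  map_smul (LinearMap.ker A)ᗮ.starProjection c x

theorem proj_stdBasis_ne_zero {i : Fin n} (hA : stdBasis n i ∉ LinearMap.ker A) :
    proj A (stdBasis n i) ≠ 0 := by
  rw [← map_zero (LinearMap.ker A)ᗮ.starProjection, ← proj_eq_starProjection, Ne, proj_eq_proj_iff,
    map_zero]
  exact hA

theorem proj_eq_sum_smul (x : EuclideanSpace ℝ (Fin n)) :
    proj A x = ∑ i, x i • proj A (stdBasis n i) := by
  conv_lhs => rw [← (EuclideanSpace.basisFun (Fin n) ℝ).sum_repr x]
  simp [proj_eq_starProjection, stdBasis]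

theorem wl1_eq_sum_norm (x : EuclideanSpace ℝ (Fin n)) :
    wl1 A x = ∑ i, ‖x i • proj A (stdBasis n i)‖ := by
  simp only [wl1, wgt, norm_smul, Real.norm_eq_abs, mul_comm]

theorem norm_proj_le_wl1 (x : EuclideanSpace ℝ (Fin n)) : ‖proj A x‖ ≤ wl1 A x := by
  rw [proj_eq_sum_smul, wl1_eq_sum_norm]
  exact norm_sum_le _ _

theorem wl1_smul_stdBasis (c : ℝ) (j : Fin n) :
    wl1 A (c • stdBasis n j) = ‖proj A (c • stdBasis n j)‖ := by
  rw [wl1_eq_sum_norm, Finset.sum_eq_single j (fun i _ hij => by simp [stdBasis, hij]) (by simp)]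
  simp [stdBasis, proj_eq_starProjection]

theorem linearIndependent_proj_stdBasis
    (hNP : ∀ i j : Fin n, i ≠ j → ∀ η : ℝ, A (stdBasis n i) ≠ η • A (stdBasis n j))
    {i k : Fin n} (hik : i ≠ k) :
    LinearIndependent ℝ ![proj A (stdBasis n i), proj A (stdBasis n k)] := by
  have hi : A (stdBasis n i) ≠ 0 := by simpa using hNP i k hik 0
  have hcomp : A ∘ ![proj A (stdBasis n i), proj A (stdBasis n k)] =
      ![A (stdBasis n i), A (stdBasis n k)] := by
    ext1 l; fin_cases l <;> simp [map_proj]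
  refine LinearIndependent.of_comp A ?_
  rw [hcomp, LinearIndependent.pair_iff' hi]
  exact fun a h => hNP k i hik.symm a h.symm

theorem wl1_smul_stdBasis_le_of_map_eq {c : ℝ} {j : Fin n} {x : EuclideanSpace ℝ (Fin n)}
    (hx : A x = A (c • stdBasis n j)) : wl1 A (c • stdBasis n j) ≤ wl1 A x := by
  rw [wl1_smul_stdBasis, ← (proj_eq_proj_iff A).mpr hx]
  exact norm_proj_le_wl1 A x

theorem eq_zero_or_eq_zero_of_norm_proj_eq_wl1
    (hNP : ∀ i j : Fin n, i ≠ j → ∀ η : ℝ, A (stdBasis n i) ≠ η • A (stdBasis n j))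
    {y : EuclideanSpace ℝ (Fin n)} (h : ‖proj A y‖ = wl1 A y) {i k : Fin n} (hik : i ≠ k) :
    y i = 0 ∨ y k = 0 := by
  by_contra! hne
  rw [proj_eq_sum_smul, wl1_eq_sum_norm] at h
  exact not_sameRay_smul_smul_of_linearIndependent (linearIndependent_proj_stdBasis A hNP hik)
    hne.1 hne.2 (sameRay_of_norm_sum_eq_sum_norm h hik)

theorem eq_smul_stdBasis_of_wl1_le {j : Fin n} (hA : stdBasis n j ∉ LinearMap.ker A)
    (hNP : ∀ i j : Fin n, i ≠ j → ∀ η : ℝ, A (stdBasis n i) ≠ η • A (stdBasis n j))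
    {c : ℝ} (hc : c ≠ 0) {y : EuclideanSpace ℝ (Fin n)} (hy : A y = A (c • stdBasis n j))
    (hle : wl1 A y ≤ wl1 A (c • stdBasis n j)) : y = c • stdBasis n j := by
  have hPy : proj A y = c • proj A (stdBasis n j) := by
    rw [(proj_eq_proj_iff A).mpr hy, proj_smul]
  have hnorm : ‖proj A y‖ = wl1 A y :=
    le_antisymm (norm_proj_le_wl1 A y)
      (by rwa [(proj_eq_proj_iff A).mpr hy, ← wl1_smul_stdBasis])
  have hoff : ∀ k, k ≠ j → y k = 0 := by
    intro k hkj
    by_contra hyk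
    have hsupp : y = y k • stdBasis n k := eq_smul_stdBasis_of_forall_ne fun l hlk =>
      (eq_zero_or_eq_zero_of_norm_proj_eq_wl1 A hNP hnorm hlk).resolve_right hyk
    have hrel : y k • proj A (stdBasis n k) + (-c) • proj A (stdBasis n j) = 0 := by
      rw [← proj_smul, ← hsupp, hPy, neg_smul, add_neg_cancel]
    exact hc (neg_eq_zero.mp
      (LinearIndependent.pair_iff.mp (linearIndependent_proj_stdBasis A hNP hkj) _ _ hrel).2)
  have hsupp := eq_smul_stdBasis_of_forall_ne hoff
  have hyj : y j = c := smul_left_injective ℝ (proj_stdBasis_ne_zero A hA) <| by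
    simp only [← hPy, ← proj_smul, ← hsupp]
  rw [hsupp, hyj]

end Projection

theorem stmt13 {m n : ℕ}
    (A : EuclideanSpace ℝ (Fin n) →ₗ[ℝ] EuclideanSpace ℝ (Fin m))
    (hA : ∀ i, stdBasis n i ∉ LinearMap.ker A)
    (hNP : ∀ i j : Fin n, i ≠ j → ∀ η : ℝ, A (stdBasis n i) ≠ η • A (stdBasis n j))
 :
    ∀ (j : Fin n) (xj : ℝ), xj ≠ 0 →
      (∀ x : EuclideanSpace ℝ (Fin n), A x = A (xj • stdBasis n j) →
        wl1 A (xj • stdBasis n j) ≤ wl1 A x) ∧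
      ∀ y : EuclideanSpace ℝ (Fin n), A y = A (xj • stdBasis n j) →
        (∀ x : EuclideanSpace ℝ (Fin n), A x = A (xj • stdBasis n j) → wl1 A y ≤ wl1 A x) →
        y = xj • stdBasis n j := by
  intro j xj hxj
  exact ⟨fun x hx => wl1_smul_stdBasis_le_of_map_eq A hx,
    fun y hy hmin => eq_smul_stdBasis_of_wl1_le A (hA j) hNP hxj hy (hmin _ rfl)⟩
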